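/- For every α > 0 there exists η0 > 0 such that for every 0 < η < η0 there exists a natural number n0 such that the following holds for all n ≥ n0: if H is a 3-graph on n vertices with minimum codegree δ(H) ≥ n/3 + αn, then every set of three distinct vertices of H contains two distinct vertices which are (η, 1)-linked in H. -/

import Mathlib

open Finset

/-- `H` is a 3-uniform hypergraph (every edge has exactly 3 vertices). -/
def Is3Graph {V : Type*} [DecidableEq V] (H : Finset (Finset V)) : Prop :=
  ∀ e ∈ H, e.card = 3

/-- The codegree of the pair `x, y` in `H`: the number of edges containing both. -/
def codeg {V : Type*} [DecidableEq V] (H : Finset (Finset V)) (x y : V) : ℕ :=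
  (H.filter fun e => x ∈ e ∧ y ∈ e).card

/-- A 5-set `S` supports a copy of the generalised triangle `T` in `H`. -/
def SupportsT {V : Type*} [DecidableEq V] (H : Finset (Finset V)) (S : Finset V) : Prop :=
  ∃ a b c d e : V, ({a, b, c, d, e} : Finset V).card = 5 ∧
    ({a, b, c, d, e} : Finset V) = S ∧
    ({a, b, c} : Finset V) ∈ H ∧ ({a, b, d} : Finset V) ∈ H ∧ ({c, d, e} : Finset V) ∈ H

/-- `P` is a `T`-tiling in `H`: a collection of pairwise disjoint 5-sets, each
supporting a copy of the generalised triangle. -/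
def IsTTiling {V : Type*} [DecidableEq V] (H P : Finset (Finset V)) : Prop :=
  (∀ S ∈ P, SupportsT H S) ∧ (P : Set (Finset V)).PairwiseDisjoint id

/-- `H[W]` has a perfect `T`-tiling: a `T`-tiling whose tiles partition `W`. -/
def HasPerfectTTilingOn {V : Type*} [DecidableEq V] (H : Finset (Finset V)) (W : Finset V) : Prop :=
  ∃ P : Finset (Finset V), IsTTiling H P ∧ P.biUnion id = W

/-- `H` has a perfect `T`-tiling. -/
def HasPerfectTTiling {V : Type*} [DecidableEq V] [Fintype V] (H : Finset (Finset V)) : Prop :=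
  HasPerfectTTilingOn H Finset.univ

/-- `u` and `v` are `(η, r)`-linked in `H`. -/
def Linked {V : Type*} [DecidableEq V] [Fintype V] (H : Finset (Finset V)) (η : ℝ) (r : ℕ)
    (u v : V) : Prop :=
  η * ((Fintype.card V).choose (5 * r - 1) : ℝ) ≤
    (({S : Finset V | S.card = 5 * r - 1 ∧ HasPerfectTTilingOn H (insert u S) ∧
        HasPerfectTTilingOn H (insert v S)} : Set (Finset V)).ncard : ℝ)

/-- `X` is `(η, r)`-closed in `H`. -/
def TClosed {V : Type*} [DecidableEq V] [Fintype V] (H : Finset (Finset V)) (η : ℝ) (r : ℕ)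
    (X : Finset V) : Prop :=
  ∀ u ∈ X, ∀ v ∈ X, Linked H η r u v

/-!
Write `L(w)` for the set of ordered pairs `(a, b)` with `{w, a, b}` an edge. Each link has
at least `(n - 1)(n/3 + αn)` of the `n(n - 1)` ordered pairs of distinct vertices, so by
inclusion–exclusion two of the three links `L(x), L(y), L(z)` share at least `αn(n - 1)` pairs.
If `L(u) ∩ L(v)` is that large, Cauchy–Schwarz gives `Ω(α²n³)` triples `(b, c, d)` with
`(b, c), (b, d)` in it and `c ≠ d`, and the codegree of `c, d` extends each by `n/3` vertices `e`;
then `{b, c, d, e}` together with `u` (edges `ubc, ubd, cde`) or with `v` is a copy of `T`.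
Each 4-set arises from at most `4⁴` quadruples, giving `Ω(α²n⁴)` linking 4-sets.
-/

namespace Finset

variable {α β : Type*}

theorem card_filter_univ_prod [Fintype α] [Fintype β] (p : α × β → Prop) [DecidablePred p] :
    #{q | p q} = ∑ a, #{b | p (a, b)} := by
  simp only [card_filter, Fintype.sum_prod_type]

theorem card_filter_product (s : Finset α) (t : Finset β) (p : α × β → Prop)
    [DecidablePred p] :
    #{q ∈ s ×ˢ t | p q} = ∑ a ∈ s, #{b ∈ t | p (a, b)} := by
  simp only [card_filter, sum_product]

theorem card_add_card_add_card_le [DecidableEq α] (A B C : Finset α) :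
    #A + #B + #C ≤ #(A ∪ B ∪ C) + #(A ∩ B) + #(A ∩ C) + #(B ∩ C) := by
  have hAB := card_union_add_card_inter A B
  have hABC := card_union_add_card_inter (A ∪ B) C
  have hC : #((A ∪ B) ∩ C) ≤ #(A ∩ C) + #(B ∩ C) := by
    rw [union_inter_distrib_right]
    exact card_union_le _ _
  omega

end Finset

variable {V : Type*} [DecidableEq V] {H : Finset (Finset V)}

theorem Is3Graph.ne_of_mem (h3 : Is3Graph H) {a b c : V} (he : {a, b, c} ∈ H) :
    a ≠ b ∧ a ≠ c ∧ b ≠ c := by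
  have hcard := h3 _ he
  refine ⟨?_, ?_, ?_⟩ <;> rintro rfl <;>
    simp only [mem_insert, mem_singleton, true_or, or_true, insert_eq_of_mem] at hcard <;>
    exact absurd hcard (card_le_two.trans_lt (by norm_num)).ne

theorem hasPerfectTTilingOn_of_supportsT {S : Finset V} (h : SupportsT H S) :
    HasPerfectTTilingOn H S :=
  ⟨{S}, ⟨by simpa using h, by simp⟩, by simp⟩

theorem Is3Graph.supportsT (h3 : Is3Graph H) {a b c d e : V} (habc : {a, b, c} ∈ H)
    (habd : {a, b, d} ∈ H) (hcde : {c, d, e} ∈ H) (hea : e ≠ a) (heb : e ≠ b) :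
    SupportsT H {a, b, c, d, e} := by
  obtain ⟨hab, hac, hbc⟩ := h3.ne_of_mem habc
  obtain ⟨-, had, hbd⟩ := h3.ne_of_mem habd
  obtain ⟨hcd, hce, hde⟩ := h3.ne_of_mem hcde
  refine ⟨a, b, c, d, e, ?_, rfl, habc, habd, hcde⟩
  simp [card_insert_of_notMem, *, hea.symm, heb.symm]

theorem card_le_card_image_quadruple (s : Finset ((V × V × V) × V)) :
    #s ≤ 4 ^ 4 * #(s.image fun q => ({q.1.1, q.1.2.1, q.1.2.2, q.2} : Finset V)) := by
  refine card_le_mul_card_image s _ fun S hS => ?_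
  have hS4 : #S ≤ 4 := by
    obtain ⟨q, -, rfl⟩ := mem_image.1 hS
    exact card_le_four
  calc #{q ∈ s | ({q.1.1, q.1.2.1, q.1.2.2, q.2} : Finset V) = S}
      ≤ #((S ×ˢ S ×ˢ S) ×ˢ S) := card_le_card fun q hq => by
        obtain ⟨-, rfl⟩ := mem_filter.1 hq
        simp
    _ = #S ^ 4 := by simp only [card_product]; ring
    _ ≤ 4 ^ 4 := Nat.pow_le_pow_left hS4 4

theorem cube_le_sq_div_sub {n α M : ℝ} (hn : 2 ≤ n) (hαn : 4 ≤ α * n)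
    (hM : (n - 1) * (α * n) ≤ M) : α ^ 2 * n ^ 3 / 8 ≤ M ^ 2 / n - M := by
  have hn0 : 0 < n := by linarith
  have hM2 : α * n ^ 2 / 2 ≤ M := by nlinarith
  have h2n : 2 * n ≤ M := by nlinarith
  have hsq : (α * n ^ 2 / 2) ^ 2 ≤ M ^ 2 := pow_le_pow_left₀ (by nlinarith) hM2 2
  rw [le_sub_iff_add_le, le_div_iff₀ hn0]
  nlinarith [mul_le_mul_of_nonneg_left h2n (by linarith : 0 ≤ M)]

section

variable [Fintype V]

theorem Is3Graph.codeg_le_card_filter (h3 : Is3Graph H) {c d : V} (hcd : c ≠ d) :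
    codeg H c d ≤ #{e | {c, d, e} ∈ H} := by
  refine card_le_card_of_surjOn (fun e => {c, d, e}) fun E hE => ?_
  simp only [coe_filter, Set.mem_ofPred_eq] at hE
  obtain ⟨hEH, hcE, hdE⟩ := hE
  have hsub : {c, d} ⊆ E := by simp [insert_subset_iff, hcE, hdE]
  obtain ⟨e, he⟩ : ∃ e, E \ {c, d} = {e} := by
    rw [← card_eq_one, card_sdiff_of_subset hsub, h3 E hEH, card_pair hcd]
  have hEe : {c, d, e} = E := by
    rw [← union_sdiff_of_subset hsub, he, insert_union, singleton_union]
  exact ⟨e, by simpa [hEe] using hEH, hEe⟩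

def link (H : Finset (Finset V)) (w : V) : Finset (V × V) :=
  {p | {w, p.1, p.2} ∈ H}

theorem Is3Graph.link_subset_offDiag (h3 : Is3Graph H) (w : V) :
    link H w ⊆ univ.offDiag := fun p hp => by
  simp only [link, mem_filter, mem_univ, true_and] at hp
  simpa using (h3.ne_of_mem hp).2.2

theorem Is3Graph.card_link_ge (h3 : Is3Graph H) {δ : ℝ}
    (hdeg : ∀ x y : V, x ≠ y → δ ≤ codeg H x y) (w : V) :
    (Fintype.card V - 1) * δ ≤ #(link H w) := by
  have hfibre (a : V) (haw : a ≠ w) : δ ≤ #{b | {w, a, b} ∈ H} :=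
    (hdeg w a haw.symm).trans (mod_cast h3.codeg_le_card_filter haw.symm)
  calc (Fintype.card V - 1) * δ = ∑ _a ∈ univ.erase w, δ := by
        rw [sum_const, card_erase_of_mem (mem_univ w), card_univ, nsmul_eq_mul,
          Nat.cast_pred (Fintype.card_pos_iff.2 ⟨w⟩)]
    _ ≤ ∑ a ∈ univ.erase w, (#{b | {w, a, b} ∈ H} : ℝ) :=
        sum_le_sum fun a ha => hfibre a (ne_of_mem_erase ha)
    _ ≤ ∑ a, (#{b | {w, a, b} ∈ H} : ℝ) :=
        sum_le_sum_of_subset_of_nonneg (subset_univ _) fun _ _ _ => Nat.cast_nonneg _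
    _ = #(link H w) := by
        rw [link, card_filter_univ_prod (fun p : V × V => {w, p.1, p.2} ∈ H), Nat.cast_sum]

theorem Is3Graph.exists_card_inter_link_ge (h3 : Is3Graph H) {β : ℝ}
    (hdeg : ∀ x y : V, x ≠ y → Fintype.card V / 3 + β ≤ codeg H x y) (x y z : V) :
    (Fintype.card V - 1) * β ≤ #(link H x ∩ link H y) ∨
      (Fintype.card V - 1) * β ≤ #(link H x ∩ link H z) ∨
      (Fintype.card V - 1) * β ≤ #(link H y ∩ link H z) := by
  have hunion : #(link H x ∪ link H y ∪ link H z) ≤ #(univ : Finset V).offDiag :=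
    card_le_card <| union_subset
      (union_subset (h3.link_subset_offDiag x) (h3.link_subset_offDiag y))
      (h3.link_subset_offDiag z)
  have hsum := (card_add_card_add_card_le (link H x) (link H y) (link H z)).trans
    (Nat.add_le_add_right (Nat.add_le_add_right (Nat.add_le_add_right hunion _) _) _)
  rw [offDiag_card, card_univ] at hsum
  have hsumR : (#(link H x) + #(link H y) + #(link H z) : ℝ) ≤
      Fintype.card V * (Fintype.card V - 1) + #(link H x ∩ link H y) +
        #(link H x ∩ link H z) + #(link H y ∩ link H z) := by
    rw [mul_sub_one, ← Nat.cast_mul, ← Nat.cast_sub (Nat.le_mul_self _)]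
    exact_mod_cast hsum
  have hx := h3.card_link_ge hdeg x
  have hy := h3.card_link_ge hdeg y
  have hz := h3.card_link_ge hdeg z
  by_contra! h
  linarith

def cherries (G : Finset (V × V)) : Finset (V × V × V) :=
  {t | (t.1, t.2.1) ∈ G ∧ (t.1, t.2.2) ∈ G ∧ t.2.1 ≠ t.2.2}

theorem card_cherries_ge (G : Finset (V × V)) :
    (#G : ℝ) ^ 2 / Fintype.card V - #G ≤ #(cherries G) := by
  set deg : V → ℕ := fun b => #{c | (b, c) ∈ G}
  have hG : #G = ∑ b, deg b := by
    rw [← card_filter_univ_prod (· ∈ G), filter_mem_eq_inter, univ_inter]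
  have hcherries : #(cherries G) = ∑ b, (deg b * deg b - deg b) := by
    rw [cherries, card_filter_univ_prod]
    refine sum_congr rfl fun b _ => ?_
    rw [← offDiag_card]
    congr 1
    ext ⟨c, d⟩
    simp
  have hCS : (#G : ℝ) ^ 2 ≤ (∑ b, (deg b : ℝ) ^ 2) * Fintype.card V := by
    simpa [hG, mul_comm] using sq_sum_le_card_mul_sum_sq (s := univ) (f := fun b => (deg b : ℝ))
  have hcherriesR : (#(cherries G) : ℝ) = ∑ b, (deg b : ℝ) ^ 2 - #G := by
    rw [hcherries, hG, Nat.cast_sum, Nat.cast_sum, ← sum_sub_distrib]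
    refine sum_congr rfl fun b _ => ?_
    rw [Nat.cast_sub (Nat.le_mul_self _), Nat.cast_mul, sq]
  rw [hcherriesR]
  gcongr
  exact div_le_of_le_mul₀ (Nat.cast_nonneg _) (sum_nonneg fun _ _ => sq_nonneg _) hCS

-- `(b, c, d, e)` encodes the copies `ubcde` and `vbcde` of `T`, with edges `ubc, ubd, cde`.
def linkingQuadruples (H : Finset (Finset V)) (u v : V) : Finset ((V × V × V) × V) :=
  {q ∈ cherries (link H u ∩ link H v) ×ˢ univ |
    {q.1.2.1, q.1.2.2, q.2} ∈ H ∧ q.2 ∉ ({q.1.1, u, v} : Finset V)}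

theorem Is3Graph.card_cherries_mul_le_card_linkingQuadruples (h3 : Is3Graph H) {k : ℝ}
    (hdeg : ∀ x y : V, x ≠ y → k + 3 ≤ codeg H x y) (u v : V) :
    #(cherries (link H u ∩ link H v)) * k ≤ #(linkingQuadruples H u v) := by
  rw [linkingQuadruples, card_filter_product, Nat.cast_sum, ← nsmul_eq_mul, ← sum_const]
  refine sum_le_sum fun ⟨b, c, d⟩ hbcd => ?_
  have hcd : c ≠ d := (mem_filter.1 hbcd).2.2.2
  have hcard :
      #{e | {c, d, e} ∈ H} ≤ #{e | {c, d, e} ∈ H ∧ e ∉ ({b, u, v} : Finset V)} + 3 := by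
    rw [← filter_filter, ← sdiff_eq_filter]
    exact card_le_card_sdiff_add_card.trans (Nat.add_le_add_left card_le_three _)
  have hk := (hdeg c d hcd).trans (Nat.cast_le.2 ((h3.codeg_le_card_filter hcd).trans hcard))
  push_cast at hk
  linarith

open Classical in
noncomputable def linkingSets (H : Finset (Finset V)) (u v : V) : Finset (Finset V) :=
  {S | #S = 4 ∧ HasPerfectTTilingOn H (insert u S) ∧ HasPerfectTTilingOn H (insert v S)}

theorem linked_one_of_le_card_linkingSets {η : ℝ} {u v : V}
    (h : η * (Fintype.card V).choose 4 ≤ #(linkingSets H u v)) : Linked H η 1 u v := by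
  rw [linkingSets, ← Set.ncard_coe_finset, coe_filter] at h
  simpa only [Linked, mem_univ, true_and] using h

theorem Is3Graph.mem_linkingSets_of_mem_linkingQuadruples (h3 : Is3Graph H) {u v : V}
    {q : (V × V × V) × V} (hq : q ∈ linkingQuadruples H u v) :
    {q.1.1, q.1.2.1, q.1.2.2, q.2} ∈ linkingSets H u v := by
  obtain ⟨⟨b, c, d⟩, e⟩ := q
  simp only [linkingQuadruples, cherries, link, mem_filter, mem_product, mem_inter, mem_univ,
    and_true, true_and, mem_insert, mem_singleton, not_or] at hq
  obtain ⟨⟨⟨hubc, hvbc⟩, ⟨hubd, hvbd⟩, hcd⟩, hcde, heb, heu, hev⟩ := hq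
  obtain ⟨hub, huc, hbc⟩ := h3.ne_of_mem hubc
  obtain ⟨-, hud, hbd⟩ := h3.ne_of_mem hubd
  obtain ⟨-, hce, hde⟩ := h3.ne_of_mem hcde
  simp only [linkingSets, mem_filter, mem_univ, true_and]
  refine ⟨?_, hasPerfectTTilingOn_of_supportsT (h3.supportsT hubc hubd hcde heu heb),
    hasPerfectTTilingOn_of_supportsT (h3.supportsT hvbc hvbd hcde hev heb)⟩
  simp [card_insert_of_notMem, *, Ne.symm heb]

theorem Is3Graph.linked_of_card_inter_link_ge (h3 : Is3Graph H) {α η : ℝ}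
    (hn : 2 ≤ Fintype.card V) (hαn : 4 ≤ α * Fintype.card V)
    (hdeg : ∀ x y : V, x ≠ y → Fintype.card V / 3 + α * Fintype.card V ≤ codeg H x y)
    (hη : η ≤ α ^ 2 / 256) {u v : V}
    (hG : (Fintype.card V - 1) * (α * Fintype.card V) ≤ #(link H u ∩ link H v)) :
    Linked H η 1 u v := by
  apply linked_one_of_le_card_linkingSets
  set n := Fintype.card V
  have hcherries := (cube_le_sq_div_sub (mod_cast hn) hαn hG).trans
    (card_cherries_ge (link H u ∩ link H v))
  have hquadruples := h3.card_cherries_mul_le_card_linkingQuadruples (k := n / 3)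
    (fun x y hxy => by linarith [hdeg x y hxy]) u v
  have hlinking : #(linkingQuadruples H u v) ≤ 4 ^ 4 * #(linkingSets H u v) :=
    (card_le_card_image_quadruple _).trans <| Nat.mul_le_mul_left _ <| card_le_card <|
      image_subset_iff.2 fun _ hq => h3.mem_linkingSets_of_mem_linkingQuadruples hq
  have hchoose : (n.choose 4 : ℝ) ≤ n ^ 4 / 24 := Nat.choose_le_pow_div 4 n
  calc η * n.choose 4 ≤ α ^ 2 / 256 * (n ^ 4 / 24) :=
        mul_le_mul hη hchoose (Nat.cast_nonneg _) (by positivity)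
    _ = α ^ 2 * n ^ 3 / 8 * (n / 3) / 4 ^ 4 := by ring
    _ ≤ #(cherries (link H u ∩ link H v)) * (n / 3) / 4 ^ 4 := by gcongr
    _ ≤ #(linkingQuadruples H u v) / 4 ^ 4 := by gcongr
    _ ≤ #(linkingSets H u v) := by
        rw [div_le_iff₀ (by norm_num), mul_comm]
        exact_mod_cast hlinking

end

/-- For every `α > 0` there is `η0 > 0` such that for every `0 < η < η0` there is `n0`
such that in any 3-graph on `n ≥ n0` vertices with minimum codegree at least `n/3 + αn`,
any three distinct vertices contain two distinct vertices which are `(η, 1)`-linked. -/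
theorem two_of_three_linked :
    ∀ α : ℝ, 0 < α → ∃ η0 : ℝ, 0 < η0 ∧ ∀ η : ℝ, 0 < η → η < η0 →
      ∃ n0 : ℕ, ∀ n : ℕ, n0 ≤ n →
        ∀ H : Finset (Finset (Fin n)), Is3Graph H →
          (∀ x y : Fin n, x ≠ y → (n : ℝ) / 3 + α * n ≤ (codeg H x y : ℝ)) →
          ∀ x y z : Fin n, x ≠ y → x ≠ z → y ≠ z →
            Linked H η 1 x y ∨ Linked H η 1 x z ∨ Linked H η 1 y z := by
  intro α hα
  refine ⟨α ^ 2 / 256, by positivity, fun η _ hη => ⟨⌈4 / α⌉₊ + 2, ?_⟩⟩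
  intro n hn H h3 hdeg x y z _ _ _
  have hn2 : 2 ≤ Fintype.card (Fin n) := by rw [Fintype.card_fin]; omega
  have hαn : 4 ≤ α * Fintype.card (Fin n) := by
    rw [Fintype.card_fin, ← div_le_iff₀' hα]
    exact (Nat.le_ceil _).trans (mod_cast (Nat.le_add_right _ 2).trans hn)
  replace hdeg : ∀ u v : Fin n, u ≠ v →
      (Fintype.card (Fin n) : ℝ) / 3 + α * Fintype.card (Fin n) ≤ codeg H u v := by
    rwa [Fintype.card_fin]
  have hlinked := fun u v => h3.linked_of_card_inter_link_ge (u := u) (v := v) hn2 hαn hdeg hη.le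
  rcases h3.exists_card_inter_link_ge hdeg x y z with h | h | h
  · exact .inl (hlinked x y h)
  · exact .inr (.inl (hlinked x z h))
  · exact .inr (.inr (hlinked y z h))
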